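/- First-order expansion recovering Equilibrium Propagation: for a finite state space with one-dimensional parameter θ, the derivative of J at θ satisfies J'(θ) = -(1/T)·Cov_{s∼ρ_0(·;θ)}[ℓ(s), ∂_θ E(θ,s)] + R(θ), where the remainder R(θ) = -(1/T)·∫_0^1 (Cov_{ρ_β}[ℓ, ∂_θ E] - Cov_{ρ_0}[ℓ, ∂_θ E]) dβ vanishes when the covariance Cov_{ρ_β}[ℓ, ∂_θ E] is constant in β. -/

import Mathlib

/-!
Differentiating `-T log Z` in `θ` gives the Gibbs average of `∂_θ E`, so `J'(θ)` is the
difference of that average at `β = 1` and `β = 0`. Differentiating a Gibbs average in `β` gives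
`-(1/T)` times a covariance with `ℓ`, hence the fundamental theorem of calculus turns that
difference into `-(1/T) ∫_0^1 Cov_{ρ_β}[ℓ, ∂_θ E] dβ`; splitting off `Cov_{ρ_0}` leaves the remainder.
-/

open Real Finset

section Gibbs

variable {S : Type*} [Fintype S]

noncomputable def partitionFunction (T : ℝ) (H : S → ℝ) : ℝ := ∑ s, exp (-(H s / T))

noncomputable def freeEnergy (T : ℝ) (H : S → ℝ) : ℝ := -T * log (partitionFunction T H)

noncomputable def gibbs (T : ℝ) (H : S → ℝ) (s : S) : ℝ := exp (-(H s / T)) / partitionFunction T H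

def weightedCov (p a b : S → ℝ) : ℝ :=
  ∑ s, p s * (a s * b s) - (∑ s, p s * a s) * (∑ s, p s * b s)

lemma partitionFunction_pos [Nonempty S] (T : ℝ) (H : S → ℝ) : 0 < partitionFunction T H :=
  sum_pos (fun _ _ => exp_pos _) univ_nonempty

lemma sum_gibbs_mul (T : ℝ) (H g : S → ℝ) :
    ∑ s, gibbs T H s * g s = (∑ s, exp (-(H s / T)) * g s) / partitionFunction T H := by
  simp only [gibbs, div_mul_eq_mul_div, ← sum_div]

variable {H : ℝ → S → ℝ} {H' : S → ℝ} {x : ℝ}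

lemma hasDerivAt_sum_exp_mul (T : ℝ) (hH : ∀ s, HasDerivAt (fun x => H x s) (H' s) x)
    (g : S → ℝ) :
    HasDerivAt (fun x => ∑ s, exp (-(H x s / T)) * g s)
      (-(1 / T) * ∑ s, exp (-(H x s / T)) * (H' s * g s)) x := by
  refine (HasDerivAt.fun_sum fun s (_ : s ∈ univ) =>
    ((hH s).div_const T).neg.exp.mul_const (g s)).congr_deriv ?_
  rw [mul_sum]
  exact sum_congr rfl fun s _ => by simp only [Pi.neg_apply]; ring

lemma hasDerivAt_partitionFunction (T : ℝ) (hH : ∀ s, HasDerivAt (fun x => H x s) (H' s) x) :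
    HasDerivAt (fun x => partitionFunction T (H x))
      (-(1 / T) * ∑ s, exp (-(H x s / T)) * H' s) x := by
  simpa [partitionFunction] using hasDerivAt_sum_exp_mul T hH 1

lemma hasDerivAt_freeEnergy [Nonempty S] {T : ℝ} (hT : T ≠ 0)
    (hH : ∀ s, HasDerivAt (fun x => H x s) (H' s) x) :
    HasDerivAt (fun x => freeEnergy T (H x)) (∑ s, gibbs T (H x) s * H' s) x := by
  refine (((hasDerivAt_partitionFunction T hH).log
    (partitionFunction_pos T (H x)).ne').const_mul (-T)).congr_deriv ?_
  rw [sum_gibbs_mul]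
  field_simp

lemma hasDerivAt_sum_gibbs_mul [Nonempty S] (T : ℝ)
    (hH : ∀ s, HasDerivAt (fun x => H x s) (H' s) x) (g : S → ℝ) :
    HasDerivAt (fun x => ∑ s, gibbs T (H x) s * g s)
      (-(1 / T) * weightedCov (gibbs T (H x)) H' g) x := by
  simp only [sum_gibbs_mul]
  refine ((hasDerivAt_sum_exp_mul T hH g).div (hasDerivAt_partitionFunction T hH)
    (partitionFunction_pos T (H x)).ne').congr_deriv ?_
  simp only [weightedCov, sum_gibbs_mul]
  field_simp
  ring

lemma continuous_weightedCov_gibbs [Nonempty S] (T : ℝ) {H' : ℝ → S → ℝ}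
    (hH : ∀ x s, HasDerivAt (fun x => H x s) (H' x s) x) (a b : S → ℝ) :
    Continuous fun x => weightedCov (gibbs T (H x)) a b := by
  have hmean (g : S → ℝ) : Continuous fun x => ∑ s, gibbs T (H x) s * g s :=
    continuous_iff_continuousAt.2 fun x => (hasDerivAt_sum_gibbs_mul T (hH x) g).continuousAt
  exact (hmean _).sub ((hmean a).mul (hmean b))

theorem hasDerivAt_freeEnergy_sub_eq_integral_weightedCov [Nonempty S] {T : ℝ} (hT : T ≠ 0)
    {E : ℝ → S → ℝ} {E' : S → ℝ} {θ : ℝ} (ℓ : S → ℝ)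
    (hE : ∀ s, HasDerivAt (fun θ => E θ s) (E' s) θ) :
    HasDerivAt
      (fun θ => freeEnergy T (fun s => E θ s + 1 * ℓ s) - freeEnergy T (fun s => E θ s + 0 * ℓ s))
      (-(1 / T) * ∫ β in (0:ℝ)..1, weightedCov (gibbs T fun s => E θ s + β * ℓ s) ℓ E') θ := by
  have hβ (s : S) (β : ℝ) : HasDerivAt (fun β => E θ s + β * ℓ s) (ℓ s) β :=
    (hasDerivAt_mul_const (ℓ s)).const_add (E θ s)
  rw [← intervalIntegral.integral_const_mul,
    intervalIntegral.integral_eq_sub_of_hasDerivAt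
      (fun β _ => hasDerivAt_sum_gibbs_mul T (fun s => hβ s β) E')
      ((continuous_const.mul
        (continuous_weightedCov_gibbs T (fun β s => hβ s β) ℓ E')).intervalIntegrable 0 1)]
  exact (hasDerivAt_freeEnergy hT fun s => (hE s).add_const _).sub
    (hasDerivAt_freeEnergy hT fun s => (hE s).add_const _)

end Gibbs

theorem equilibrium_propagation_first_order_general
    {S : Type*} [Fintype S] [Nonempty S]
    (E : ℝ → S → ℝ) (ℓ : S → ℝ) (T : ℝ) (hT : 0 < T)
    (E' : ℝ → S → ℝ)
    (hE : ∀ θ s, HasDerivAt (fun θ' => E θ' s) (E' θ s) θ)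
    (Z : ℝ → ℝ → ℝ)
    (hZ : ∀ β θ, Z β θ = ∑ s, Real.exp (-((E θ s + β * ℓ s) / T)))
    (ρ : ℝ → ℝ → S → ℝ)
    (hρ : ∀ β θ s, ρ β θ s = Real.exp (-((E θ s + β * ℓ s) / T)) / Z β θ)
    (A : ℝ → ℝ → ℝ) (hA : ∀ θ β, A θ β = -T * Real.log (Z β θ))
    (J : ℝ → ℝ) (hJ : ∀ θ, J θ = A θ 1 - A θ 0)
    (Cov : ℝ → ℝ → ℝ)
    (hCov : ∀ β θ, Cov β θ =
      (∑ s, ρ β θ s * (ℓ s * E' θ s)) -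
        (∑ s, ρ β θ s * ℓ s) * (∑ s, ρ β θ s * E' θ s))
    (R : ℝ → ℝ)
    (hR : ∀ θ, R θ = -(1 / T) * ∫ β in (0:ℝ)..1, (Cov β θ - Cov 0 θ))
    (θ : ℝ) :
    HasDerivAt J (-(1 / T) * Cov 0 θ + R θ) θ ∧
      ((∀ β ∈ Set.Icc (0:ℝ) 1, Cov β θ = Cov 0 θ) → R θ = 0) := by
  have hJ_eq : J = fun θ =>
      freeEnergy T (fun s => E θ s + 1 * ℓ s) - freeEnergy T (fun s => E θ s + 0 * ℓ s) := by
    funext θ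
    simp only [hJ, hA, hZ, freeEnergy, partitionFunction]
  have hCov_eq (β : ℝ) : Cov β θ = weightedCov (gibbs T fun s => E θ s + β * ℓ s) ℓ (E' θ) := by
    simp only [hCov, hρ, hZ, weightedCov, gibbs, partitionFunction]
  have hCov_cont : Continuous fun β => Cov β θ := by
    simp only [hCov_eq]
    exact continuous_weightedCov_gibbs T
      (fun β s => (hasDerivAt_mul_const (ℓ s)).const_add (E θ s)) ℓ (E' θ)
  refine ⟨?_, fun hconst => ?_⟩
  · have hsplit : -(1 / T) * Cov 0 θ + R θ = -(1 / T) * ∫ β in (0:ℝ)..1, Cov β θ := by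
      rw [hR, intervalIntegral.integral_sub (hCov_cont.intervalIntegrable 0 1)
        intervalIntegrable_const]
      simp only [intervalIntegral.integral_const, sub_zero, one_smul]
      ring
    rw [hsplit, hJ_eq]
    simp only [hCov_eq]
    exact hasDerivAt_freeEnergy_sub_eq_integral_weightedCov hT.ne' ℓ (hE θ)
  · have hzero : Set.EqOn (fun β => Cov β θ - Cov 0 θ) 0 (Set.uIcc 0 1) := fun β hβ => by
      rw [Set.uIcc_of_le zero_le_one] at hβ
      simp [hconst β hβ]
    rw [hR, intervalIntegral.integral_congr hzero]
    simp

/-- First-order expansion recovering Equilibrium Propagation: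
`J'(θ) = -(1/T)·Cov_{ρ_0}[ℓ, ∂_θ E] + R(θ)` where the remainder
`R(θ) = -(1/T)·∫_0^1 (Cov_{ρ_β}[ℓ, ∂_θ E] - Cov_{ρ_0}[ℓ, ∂_θ E]) dβ`
vanishes when the covariance is constant in `β`. -/
theorem equilibrium_propagation_first_order
    {S : Type*} [Fintype S] [Nonempty S]
    (E : ℝ → S → ℝ) (ℓ : S → ℝ) (T : ℝ) (hT : 0 < T)
    (E' : ℝ → S → ℝ)
    (hE : ∀ θ s, HasDerivAt (fun θ' => E θ' s) (E' θ s) θ)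
    (hE' : ∀ s, Continuous (fun θ => E' θ s))
    (Z : ℝ → ℝ → ℝ)
    (hZ : ∀ β θ, Z β θ = ∑ s, Real.exp (-((E θ s + β * ℓ s) / T)))
    (ρ : ℝ → ℝ → S → ℝ)
    (hρ : ∀ β θ s, ρ β θ s = Real.exp (-((E θ s + β * ℓ s) / T)) / Z β θ)
    (A : ℝ → ℝ → ℝ) (hA : ∀ θ β, A θ β = -T * Real.log (Z β θ))
    (J : ℝ → ℝ) (hJ : ∀ θ, J θ = A θ 1 - A θ 0)
    (Cov : ℝ → ℝ → ℝ)
    (hCov : ∀ β θ, Cov β θ =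
      (∑ s, ρ β θ s * (ℓ s * E' θ s)) -
        (∑ s, ρ β θ s * ℓ s) * (∑ s, ρ β θ s * E' θ s))
    (R : ℝ → ℝ)
    (hR : ∀ θ, R θ = -(1 / T) * ∫ β in (0:ℝ)..1, (Cov β θ - Cov 0 θ))
    (θ : ℝ) :
    HasDerivAt J (-(1 / T) * Cov 0 θ + R θ) θ ∧
      ((∀ β ∈ Set.Icc (0:ℝ) 1, Cov β θ = Cov 0 θ) → R θ = 0) :=
  equilibrium_propagation_first_order_general E ℓ T hT E' hE Z hZ ρ hρ A hA J hJ Cov hCov R hR θ
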